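/- arXiv:1212.5789 — 4 statements merged into one kernel-verified Lean document; each statement's English description precedes it below -/
import Mathlib

section
/- Let F be a bijection of GF(2^m) with F(0) = 0. Then F is an APN permutation if and only if for every nonzero a ∈ GF(2^m), the set {x + F⁻¹(a + F(x)) : x ∈ GF(2^m)} has exactly 2^(m−1) elements. -/
/-! For `a ≠ 0`, the map `x ↦ x + F⁻¹(a + F x)` takes the value `b` exactly on the solutions
of `F x + F (x + b) = a`. It never takes the value `0`, and each of its fibres is closed under
the fixed-point-free involution `x ↦ x + b`, so every nonempty fibre has at least two points.
Summing fibre sizes over the range gives `2^m ≥ 2 · |range|`, with equality iff every fibre has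
at most two points, i.e. iff `F` is APN. -/

open Finset

theorem two_mul_ncard_range_eq_iff {α β : Type*} [Finite α] (f : α → β)
    (h : ∀ b ∈ Set.range f, 2 ≤ (f ⁻¹' {b}).ncard) :
    2 * (Set.range f).ncard = Nat.card α ↔ ∀ b, (f ⁻¹' {b}).ncard ≤ 2 := by
  classical
  have := Fintype.ofFinite α
  have hfiber : ∀ b, (f ⁻¹' {b}).ncard = #{x | f x = b} := fun b => by
    rw [← Set.ncard_coe_finset]; congr 1; ext; simp
  have hrange : (Set.range f).ncard = #(univ.image f) := by
    rw [← Set.ncard_coe_finset, coe_image, coe_univ, Set.image_univ]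
  rw [hrange, Nat.card_eq_fintype_card, ← card_univ,
    card_eq_sum_card_image f, mul_comm, ← smul_eq_mul, ← sum_const,
    sum_eq_sum_iff_of_le (fun b hb => by simpa [hfiber] using h b (by simpa using hb))]
  constructor
  · intro heq b
    by_cases hb : b ∈ Set.range f
    · rw [hfiber, ← heq b (by simpa using hb)]
    · simp [Set.preimage_singleton_eq_empty.mpr hb]
  · intro hle b hb
    exact le_antisymm (h b (by simpa using hb) |>.trans_eq (hfiber b)) (hfiber b ▸ hle b)

section CharTwo

variable {R : Type*} [Ring R] [CharP R 2]

def IsAPN (F : R → R) : Prop :=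
  ∀ a b : R, b ≠ 0 → {x : R | F x + F (x + b) = a}.ncard ≤ 2

def apnShift (F : R ≃ R) (a x : R) : R := x + F.symm (a + F x)

theorem apnShift_eq_iff (F : R ≃ R) (a b x : R) :
    apnShift F a x = b ↔ F x + F (x + b) = a := by
  rw [apnShift, add_comm, CharTwo.add_eq_iff_eq_add, Equiv.symm_apply_eq,
    CharTwo.add_eq_iff_eq_add, eq_comm, add_comm b, add_comm (F _)]

theorem apnShift_ne_zero (F : R ≃ R) {a : R} (ha : a ≠ 0) (x : R) : apnShift F a x ≠ 0 := by
  rw [Ne, apnShift_eq_iff, add_zero, CharTwo.add_self_eq_zero]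
  exact ha.symm

theorem apnShift_add_apnShift (F : R ≃ R) (a x : R) :
    apnShift F a (x + apnShift F a x) = apnShift F a x := by
  have h := (apnShift_eq_iff F a _ x).mp rfl
  rw [apnShift_eq_iff, CharTwo.add_cancel_right, add_comm, h]

theorem two_le_ncard_preimage_apnShift [Finite R] (F : R ≃ R) {a b : R} (ha : a ≠ 0)
    (hb : b ∈ Set.range (apnShift F a)) : 2 ≤ (apnShift F a ⁻¹' {b}).ncard := by
  obtain ⟨x, rfl⟩ := hb
  refine (Set.one_lt_ncard_iff).mpr ⟨x, x + apnShift F a x, rfl, apnShift_add_apnShift F a x, ?_⟩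
  simpa using apnShift_ne_zero F ha x

theorem isAPN_iff_two_mul_ncard_range [Finite R] (F : R ≃ R) :
    IsAPN F ↔ ∀ a ≠ 0, 2 * (Set.range (apnShift F a)).ncard = Nat.card R := by
  have hfiber (a b : R) : {x | F x + F (x + b) = a} = apnShift F a ⁻¹' {b} :=
    Set.ext fun x => (apnShift_eq_iff F a b x).symm
  constructor
  · intro hAPN a ha
    rw [two_mul_ncard_range_eq_iff _ fun _ => two_le_ncard_preimage_apnShift F ha]
    intro b
    rcases eq_or_ne b 0 with rfl | hb
    · rw [Set.preimage_singleton_eq_empty.mpr fun ⟨x, hx⟩ => apnShift_ne_zero F ha x hx,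
        Set.ncard_empty]
      exact zero_le_two
    · rw [← hfiber]
      exact hAPN a b hb
  · intro h a b hb
    rcases eq_or_ne a 0 with rfl | ha
    · simp [CharTwo.add_eq_zero, hb]
    · rw [hfiber]
      exact (two_mul_ncard_range_eq_iff _ fun _ => two_le_ncard_preimage_apnShift F ha).mp
        (h a ha) b

end CharTwo

theorem apn_iff_vF_max_general (m : ℕ) (hm : 1 ≤ m)
    (F : GaloisField 2 m ≃ GaloisField 2 m) :
    (∀ a b : GaloisField 2 m, b ≠ 0 →
      {x : GaloisField 2 m | F x + F (x + b) = a}.ncard ≤ 2) ↔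
    (∀ a : GaloisField 2 m, a ≠ 0 →
      (Set.range (fun x : GaloisField 2 m => x + F.symm (a + F x))).ncard =
        2 ^ (m - 1)) := by
  have hcard : Nat.card (GaloisField 2 m) = 2 * 2 ^ (m - 1) := by
    rw [GaloisField.card 2 m (by omega), ← pow_succ', Nat.sub_add_cancel hm]
  refine (isAPN_iff_two_mul_ncard_range F).trans (forall₂_congr fun a _ => ?_)
  rw [hcard]
  exact Nat.mul_left_cancel_iff two_pos

/-- A bijection `F` of `GF(2^m)` with `F 0 = 0` is an APN permutation iff
for every nonzero `a`, the set `{x + F⁻¹(a + F x) : x}` has exactly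
`2^(m-1)` elements. -/
theorem apn_iff_vF_max (m : ℕ) (hm : 1 ≤ m)
    (F : GaloisField 2 m ≃ GaloisField 2 m) (hF0 : F 0 = 0) :
    (∀ a b : GaloisField 2 m, b ≠ 0 →
      {x : GaloisField 2 m | F x + F (x + b) = a}.ncard ≤ 2) ↔
    (∀ a : GaloisField 2 m, a ≠ 0 →
      (Set.range (fun x : GaloisField 2 m => x + F.symm (a + F x))).ncard =
        2 ^ (m - 1)) :=
  apn_iff_vF_max_general m hm F
end

section
/- Let m be a positive integer and suppose m has a divisor m' with 1 < m' < m. Then for any t with gcd(t, 2^m − 1) = 1, the monomial permutation F(x) = x^t of GF(2^m) is not a self-embedding permutation in a closed surface for STS(H^n): there is no starting point a₁ ∈ GF(2^m) \ {0,1} such that the sequence a_{i+1} = F(F⁻¹(1) + F⁻¹(1 + a_i)) for i = 1, …, 2^(m−1) − 2 consists of 2^(m−1) − 1 pairwise distinct elements that together with 1 and the elements 1 + a_i exhaust GF(2^m) \ {0}. -/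
/-!
The fixed field `K = {x | x ^ 2 ^ m' = x}` of the `m'`-th power of Frobenius is a proper
subfield of `GF(2^m)` with more than two elements. The rotation step
`x ↦ F(F⁻¹(1) + F⁻¹(1 + x))` is injective and commutes with Frobenius, so `x ∈ K` iff its
image is in `K`. An element of `K \ {0, 1}` is covered by some `a i` or `1 + a i`, which puts
that `a i`, hence the whole sequence and everything it covers, into `K`; but the covered
elements are all nonzero elements of `GF(2^m)`, and `K` misses one of them.
-/

open Function

theorem Function.Injective.isFixedPt_apply_iff_of_commute {α : Type*} {f g : α → α}
    (hf : Injective f) (h : Function.Commute f g) {x : α} :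
    IsFixedPt g (f x) ↔ IsFixedPt g x := by
  rw [IsFixedPt, ← h x]
  exact hf.eq_iff

theorem mem_iff_mem_one_of_recurrence {α : Type*} {f : α → α} {s : Set α}
    (hf : ∀ x, f x ∈ s ↔ x ∈ s) {a : ℕ → α} {N : ℕ}
    (ha : ∀ i, 1 ≤ i → i < N → a (i + 1) = f (a i)) {i : ℕ} (hi : 1 ≤ i) (hiN : i ≤ N) :
    a i ∈ s ↔ a 1 ∈ s := by
  induction i, hi using Nat.le_induction with
  | base => rfl
  | succ i hi ih => rw [ha i hi (by omega), hf, ih (by omega)]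

theorem Subring.union_subset_of_recurrence {R : Type*} [Ring R] (K : Subring R) {f : R → R}
    (hf : ∀ x, f x ∈ K ↔ x ∈ K) {a : ℕ → R} {N : ℕ}
    (ha : ∀ i, 1 ≤ i → i < N → a (i + 1) = f (a i)) {b : R} (hbK : b ∈ K)
    (hb : b ∈ ⋃ i ∈ Set.Icc 1 N, {a i, 1 + a i}) :
    {1} ∪ ⋃ i ∈ Set.Icc 1 N, {a i, 1 + a i} ⊆ (K : Set R) := by
  have hshift : ∀ x, 1 + x ∈ K ↔ x ∈ K := fun x => K.add_mem_cancel_left K.one_mem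
  have horbit : ∀ i ∈ Set.Icc 1 N, a i ∈ K ↔ a 1 ∈ K := fun i hi =>
    mem_iff_mem_one_of_recurrence (s := (K : Set R)) hf ha hi.1 hi.2
  obtain ⟨i₀, hi₀, hb⟩ : ∃ i ∈ Set.Icc 1 N, b = a i ∨ b = 1 + a i := by simpa using hb
  have ha₁ : a 1 ∈ K := by
    refine (horbit i₀ hi₀).1 ?_
    rcases hb with rfl | rfl
    exacts [hbK, (hshift _).1 hbK]
  rintro x (rfl | hx)
  · exact K.one_mem
  obtain ⟨i, hi, rfl | rfl⟩ : ∃ i ∈ Set.Icc 1 N, x = a i ∨ x = 1 + a i := by simpa using hx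
  exacts [(horbit i hi).2 ha₁, (hshift _).2 ((horbit i hi).2 ha₁)]

section RotationStep

variable {R : Type*} [Ring R] {t t' : ℕ}

def rotationStep (t t' : ℕ) (x : R) : R := (1 ^ t' + (1 + x) ^ t') ^ t

theorem commute_rotationStep (σ : R →+* R) : Function.Commute (rotationStep t t') σ := fun x => by
  simp only [rotationStep, map_pow, map_add, map_one]

theorem rotationStep_injective (ht : Injective fun x : R => x ^ t)
    (ht' : Injective fun x : R => x ^ t') : Injective (rotationStep t t' : R → R) :=
  ht.comp ((add_right_injective _).comp (ht'.comp (add_right_injective 1)))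

end RotationStep

theorem pow_eq_self_iff_pow_sub_one_eq_one {G : Type*} [Group G] {q : ℕ} (hq : q ≠ 0) (x : G) :
    x ^ q = x ↔ x ^ (q - 1) = 1 := by
  conv_lhs => rw [← Nat.sub_add_cancel (Nat.one_le_iff_ne_zero.2 hq), pow_succ]
  exact mul_eq_right

namespace FiniteField

variable {F : Type*} [Field F]

theorem pow_eq_self_of_modEq {n : ℕ} (hn0 : n ≠ 0) (hn : n ≡ 1 [MOD Nat.card F - 1]) (x : F) :
    x ^ n = x := by
  rcases eq_or_ne x 0 with rfl | hx
  · exact zero_pow hn0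
  have hu : Units.mk0 x hx ^ n = Units.mk0 x hx ^ 1 :=
    pow_eq_pow_iff_modEq.2 (hn.of_dvd (Nat.card_units F ▸ orderOf_dvd_natCard _))
  simpa using congrArg Units.val hu

theorem pow_injective_of_mul_modEq {t t' : ℕ} (h0 : t * t' ≠ 0)
    (h : t * t' ≡ 1 [MOD Nat.card F - 1]) : Injective fun x : F => x ^ t :=
  LeftInverse.injective (g := fun x : F => x ^ t') fun x => by
    dsimp only
    rw [← pow_mul, pow_eq_self_of_modEq h0 h]

variable [Finite F]

theorem exists_units_orderOf_eq {k : ℕ} (hk : k ∣ Nat.card F - 1) : ∃ u : Fˣ, orderOf u = k := by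
  obtain ⟨g, hg⟩ := IsCyclic.exists_ofOrder_eq_natCard (α := Fˣ)
  rw [Nat.card_units] at hg
  rw [← hg] at hk
  exact ⟨g ^ (orderOf g / k), orderOf_pow_orderOf_div (orderOf_pos g).ne' hk⟩

theorem exists_pow_eq_self_ne_zero_ne_one {q : ℕ} (hq : 2 < q) (hdvd : q - 1 ∣ Nat.card F - 1) :
    ∃ b : F, b ≠ 0 ∧ b ≠ 1 ∧ b ^ q = b := by
  obtain ⟨u, hu⟩ := exists_units_orderOf_eq hdvd
  refine ⟨u, u.ne_zero, ?_, ?_⟩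
  · rw [Ne, Units.val_eq_one, ← orderOf_eq_one_iff, hu]
    omega
  · rw [← Units.val_pow_eq_pow_val, Units.val_inj, pow_eq_self_iff_pow_sub_one_eq_one (by omega),
      ← hu, pow_orderOf_eq_one]

theorem exists_pow_ne_self {q : ℕ} (hq1 : 1 < q) (hq : q < Nat.card F) :
    ∃ g : F, g ≠ 0 ∧ g ^ q ≠ g := by
  obtain ⟨u, hu⟩ := exists_units_orderOf_eq (dvd_refl (Nat.card F - 1))
  refine ⟨u, u.ne_zero, ?_⟩
  rw [Ne, ← Units.val_pow_eq_pow_val, Units.val_inj, pow_eq_self_iff_pow_sub_one_eq_one (by omega)]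
  exact pow_ne_one_of_lt_orderOf (by omega) (by omega)

end FiniteField

theorem no_closed_surface_self_embedding_of_not_prime_general (m m' t t' : ℕ)
    (hdvd : m' ∣ m) (h1 : 1 < m') (h2 : m' < m)
    (htt' : t * t' ≡ 1 [MOD 2 ^ m - 1]) :
    ¬ ∃ a : ℕ → GaloisField 2 m,
      a 1 ≠ 0 ∧ a 1 ≠ 1 ∧
      (∀ i : ℕ, 1 ≤ i → i ≤ 2 ^ (m - 1) - 2 →
        a (i + 1) = ((1 : GaloisField 2 m) ^ t' + (1 + a i) ^ t') ^ t) ∧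
      (∀ i j : ℕ, 1 ≤ i → i ≤ 2 ^ (m - 1) - 1 → 1 ≤ j → j ≤ 2 ^ (m - 1) - 1 →
        a i = a j → i = j) ∧
      ({(1 : GaloisField 2 m)} ∪
          (⋃ i ∈ Set.Icc 1 (2 ^ (m - 1) - 1), {a i, 1 + a i}) =
        {x : GaloisField 2 m | x ≠ 0}) := by
  rintro ⟨a, -, -, hrec, -, hcover⟩
  have hcard : Nat.card (GaloisField 2 m) = 2 ^ m := GaloisField.card 2 m (by omega)
  have hq : 2 ^ 2 ≤ 2 ^ m' := Nat.pow_le_pow_right two_pos h1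
  have hqm : 2 ^ m' < 2 ^ m := Nat.pow_lt_pow_right one_lt_two h2
  have htt'0 : t * t' ≠ 0 := fun h0 => by
    rw [h0, Nat.modEq_iff_dvd' (Nat.zero_le 1), Nat.dvd_one] at htt'
    omega
  rw [← hcard] at htt'
  set K := (iterateFrobenius (GaloisField 2 m) 2 m').eqLocus (RingHom.id _)
  have hK : ∀ x, x ∈ K ↔ x ^ 2 ^ m' = x := fun x => by
    rw [RingHom.mem_eqLocus, iterateFrobenius_def, RingHom.id_apply]
  have hstep : ∀ x, rotationStep t t' x ∈ K ↔ x ∈ K := fun x =>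
    (rotationStep_injective (FiniteField.pow_injective_of_mul_modEq htt'0 htt')
      (FiniteField.pow_injective_of_mul_modEq (mul_comm t t' ▸ htt'0) (mul_comm t t' ▸ htt'))
      ).isFixedPt_apply_iff_of_commute (commute_rotationStep _)
  obtain ⟨b, hb0, hb1, hbK⟩ := FiniteField.exists_pow_eq_self_ne_zero_ne_one (F := GaloisField 2 m)
    (q := 2 ^ m') (by omega) (hcard ▸ Nat.pow_sub_one_dvd_pow_sub_one 2 hdvd)
  obtain ⟨g, hg0, hgK⟩ := FiniteField.exists_pow_ne_self (F := GaloisField 2 m) (q := 2 ^ m')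
    (by omega) (by omega)
  have hsub := K.union_subset_of_recurrence hstep (fun i hi hiN => hrec i hi (by omega))
    ((hK b).2 hbK) ((hcover.ge hb0).resolve_left hb1)
  exact hgK ((hK g).1 (hsub (hcover.ge hg0)))

/-- If `m` has a divisor `m'` with `1 < m' < m`, then no monomial power
permutation `F(x) = x^t` (with `gcd(t, 2^m − 1) = 1`, inverse exponent `t'`)
is a self-embedding permutation in a closed surface for `STS(H^n)`: there is
no starting point `a 1 ∈ GF(2^m) \ {0,1}` such that the rotation sequence
`a (i+1) = F(F⁻¹(1) + F⁻¹(1 + a i))` consists of `2^(m-1) − 1` pairwise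
distinct elements which together with `1` and the elements `1 + a i` exhaust
the nonzero elements. -/
theorem no_closed_surface_self_embedding_of_not_prime (m m' t t' : ℕ)
    (hdvd : m' ∣ m) (h1 : 1 < m') (h2 : m' < m)
    (hg : Nat.gcd t (2 ^ m - 1) = 1) (htt' : t * t' ≡ 1 [MOD 2 ^ m - 1]) :
    ¬ ∃ a : ℕ → GaloisField 2 m,
      a 1 ≠ 0 ∧ a 1 ≠ 1 ∧
      (∀ i : ℕ, 1 ≤ i → i ≤ 2 ^ (m - 1) - 2 →
        a (i + 1) = ((1 : GaloisField 2 m) ^ t' + (1 + a i) ^ t') ^ t) ∧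
      (∀ i j : ℕ, 1 ≤ i → i ≤ 2 ^ (m - 1) - 1 → 1 ≤ j → j ≤ 2 ^ (m - 1) - 1 →
        a i = a j → i = j) ∧
      ({(1 : GaloisField 2 m)} ∪
          (⋃ i ∈ Set.Icc 1 (2 ^ (m - 1) - 1), {a i, 1 + a i}) =
        {x : GaloisField 2 m | x ≠ 0}) :=
  no_closed_surface_self_embedding_of_not_prime_general m m' t t' hdvd h1 h2 htt'
end

section
/- On GF(2^m), let F(x) = x⁻¹ (with F(0) = 0) and define g(x) = F(F⁻¹(1) + F⁻¹(1 + x)) for x ∈ GF(2^m) \ {0, 1}. Then g(x) = 1 + x⁻¹, and g∘g∘g is the identity on GF(2^m) \ {0, 1}. -/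
/-!
For `x ∉ {0, 1}`, characteristic 2 gives `1 + (1 + x)⁻¹ = x / (1 + x)`, so `g` is the
Möbius transformation `x ↦ 1 + x⁻¹ = (x + 1) / x`. Its matrix `[[1, 1], [1, 0]]` has
characteristic polynomial `X² + X + 1`, which divides `X³ + 1`, so its cube is scalar:
explicitly `x ↦ 1 + x⁻¹ ↦ (1 + x)⁻¹ ↦ x`.
-/

lemma one_add_inv_ne_one {K : Type*} [DivisionRing K] {x : K} (hx0 : x ≠ 0) : 1 + x⁻¹ ≠ 1 := by
  simpa using hx0

section CharTwo

variable {K : Type*} [Field K] [CharP K 2]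

lemma one_add_inv_ne_zero {x : K} (hx1 : x ≠ 1) : 1 + x⁻¹ ≠ 0 := by
  rw [Ne, CharTwo.add_eq_zero, eq_comm, inv_eq_one]
  exact hx1

lemma inv_one_add_inv_one_add {x : K} (hx0 : x ≠ 0) (hx1 : x ≠ 1) :
    (1 + (1 + x)⁻¹)⁻¹ = 1 + x⁻¹ := by
  have h1x : 1 + x ≠ 0 := by rwa [Ne, CharTwo.add_eq_zero, eq_comm]
  have : 1 + (1 + x)⁻¹ = x / (1 + x) := by
    field_simp
    linear_combination CharTwo.add_self_eq_zero (1 : K)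
  rw [this, inv_div]
  field_simp
  ring

lemma one_add_inv_one_add_inv {x : K} (hx0 : x ≠ 0) (hx1 : x ≠ 1) :
    1 + (1 + x⁻¹)⁻¹ = (1 + x)⁻¹ := by
  have h1x : 1 + x ≠ 0 := by rwa [Ne, CharTwo.add_eq_zero, eq_comm]
  have : 1 + x⁻¹ = (1 + x) / x := by rw [add_div, div_self hx0, one_div, add_comm]
  rw [this, inv_div]
  field_simp
  linear_combination CharTwo.add_self_eq_zero x

lemma one_add_inv_iterate_three {x : K} (hx0 : x ≠ 0) (hx1 : x ≠ 1) :
    1 + (1 + (1 + x⁻¹)⁻¹)⁻¹ = x := by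
  rw [one_add_inv_one_add_inv hx0 hx1, inv_inv, ← add_assoc, CharTwo.add_self_eq_zero, zero_add]

end CharTwo

/-- The rotation step at the point `1` for the inversion permutation
`F(x) = x⁻¹` (with `0⁻¹ = 0`), namely `g(x) = F(F⁻¹(1) + F⁻¹(1 + x))`. -/
noncomputable def melasG (m : ℕ) (y : GaloisField 2 m) : GaloisField 2 m :=
  ((1 : GaloisField 2 m)⁻¹ + (1 + y)⁻¹)⁻¹

lemma melasG_eq_one_add_inv {m : ℕ} {y : GaloisField 2 m} (hy0 : y ≠ 0) (hy1 : y ≠ 1) :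
    melasG m y = 1 + y⁻¹ := by
  rw [melasG, inv_one]
  exact inv_one_add_inv_one_add hy0 hy1

/-- For `x ∉ {0,1}` we have `g(x) = 1 + x⁻¹`, `g` maps `GF(2^m) \ {0,1}` to
itself, and `g ∘ g ∘ g` is the identity there. -/
theorem melasG_formula_and_order_three (m : ℕ) (x : GaloisField 2 m)
    (hx0 : x ≠ 0) (hx1 : x ≠ 1) :
    melasG m x = 1 + x⁻¹ ∧ melasG m x ≠ 0 ∧ melasG m x ≠ 1 ∧
      melasG m (melasG m (melasG m x)) = x := by
  have hg := melasG_eq_one_add_inv hx0 hx1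
  have hg0 := one_add_inv_ne_zero hx1
  have hg1 := one_add_inv_ne_one hx0
  refine ⟨hg, hg ▸ hg0, hg ▸ hg1, ?_⟩
  rw [hg, melasG_eq_one_add_inv hg0 hg1,
    melasG_eq_one_add_inv (one_add_inv_ne_zero hg1) (one_add_inv_ne_one hg0)]
  exact one_add_inv_iterate_three hx0 hx1
end

section
/- Let F be an APN permutation of GF(2^m) with F(0) = 0 and let a ∈ GF(2^m) \ {0}. Define g(x) = F(F⁻¹(a) + F⁻¹(a + x)) for x ∈ GF(2^m) \ {0, a}. Then g has no fixed point: g(x) ≠ x for all x ∈ GF(2^m) \ {0, a}. -/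
/-!
If `g(x) = x`, then `u = F⁻¹(a)` and `v = F⁻¹(a + x)` are distinct and nonzero with
`F u + F v = F (u + v)`. For such a triple the equation `F y + F (y + (u + v)) = F (u + v)`
has the three solutions `0, u, v`, which the APN property forbids.
-/

namespace CharTwo

variable {K : Type*} [Ring K] [CharP K 2]

theorem three_le_ncard_derivative_eq_of_map_add_eq [Finite K] {F : K → K} (hF0 : F 0 = 0)
    {u v : K} (hu : u ≠ 0) (hv : v ≠ 0) (huv : u ≠ v) (h : F u + F v = F (u + v)) :
    3 ≤ {y : K | F y + F (y + (u + v)) = F (u + v)}.ncard := by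
  have hsub : ({0, u, v} : Set K) ⊆ {y | F y + F (y + (u + v)) = F (u + v)} := by
    refine Set.insert_subset_iff.mpr ⟨?_, Set.insert_subset_iff.mpr ⟨?_, ?_⟩⟩
    · simp [hF0]
    · rwa [Set.mem_ofPred_eq, CharTwo.add_cancel_left]
    · rwa [Set.singleton_subset_iff, Set.mem_ofPred_eq, add_comm u, CharTwo.add_cancel_left,
        add_comm (F v), add_comm v]
  calc 3 = ({0, u, v} : Set K).ncard :=
        (Set.ncard_eq_three.mpr ⟨0, u, v, hu.symm, hv.symm, huv, rfl⟩).symm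
    _ ≤ _ := Set.ncard_le_ncard hsub (Set.toFinite _)

theorem map_add_ne_of_apn [Finite K] {F : K → K} (hF0 : F 0 = 0)
    (hAPN : ∀ c b : K, b ≠ 0 → {x : K | F x + F (x + b) = c}.ncard ≤ 2)
    {u v : K} (hu : u ≠ 0) (hv : v ≠ 0) (huv : u ≠ v) : F u + F v ≠ F (u + v) := fun h ↦
  absurd ((three_le_ncard_derivative_eq_of_map_add_eq hF0 hu hv huv h).trans
    (hAPN _ _ (CharTwo.add_eq_zero.not.mpr huv))) (by norm_num)

end CharTwo

/-- For an APN permutation `F` of `GF(2^m)` with `F 0 = 0` and a nonzero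
point `a`, the rotation successor map `g(x) = F(F⁻¹(a) + F⁻¹(a + x))` has no
fixed point on `GF(2^m) \ {0, a}`. -/
theorem apn_rotation_no_fixed_point (m : ℕ)
    (F : GaloisField 2 m ≃ GaloisField 2 m) (hF0 : F 0 = 0)
    (hAPN : ∀ c b : GaloisField 2 m, b ≠ 0 →
      {x : GaloisField 2 m | F x + F (x + b) = c}.ncard ≤ 2)
    (a : GaloisField 2 m) (ha : a ≠ 0) :
    ∀ x : GaloisField 2 m, x ≠ 0 → x ≠ a →
      F (F.symm a + F.symm (a + x)) ≠ x := by
  intro x hx0 hxa hfix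
  have hsymm_ne_zero : ∀ {y}, y ≠ 0 → F.symm y ≠ 0 := fun hy ↦ by
    rwa [Ne, Equiv.symm_apply_eq, hF0]
  refine CharTwo.map_add_ne_of_apn hF0 hAPN (hsymm_ne_zero ha)
    (hsymm_ne_zero (CharTwo.add_eq_zero.not.mpr hxa.symm))
    (F.symm.injective.ne (add_ne_left.mpr hx0).symm) ?_
  rw [hfix, F.apply_symm_apply, F.apply_symm_apply, CharTwo.add_cancel_left]
end
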